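/- arXiv:1902.06470 — 3 statements merged into one kernel-verified Lean document; each statement's English description precedes it below -/
import Mathlib

section
/- Let M be a manifold and for each open U ⊆ M let TO(U)^I denote the set of nets of smooth sections (A_ε)_{ε∈(0,1]} of the bundle E ⊠ E* over U × U, with the equivalence ∼_U: A ∼_U B iff every x ∈ U has a neighborhood Z ⊆ U and ε₀ > 0 with A_ε|_{Z×Z} = B_ε|_{Z×Z} for ε < ε₀. Then U ↦ TO(U)^I/∼_U is a sheaf of real vector spaces: (a) if A|_{U_i} ∼ 0 for an open cover (U_i) of U then A ∼_U 0; (b) given A_i ∈ TO(U_i)^I with A_i ∼ A_j on U_i ∩ U_j, there exists A ∈ TO(U)^I with A|_{U_i} ∼ A_i for all i, constructed via a locally finite family χ_j ∈ C^∞(U×U) supported in U_j×U_j with Σχ_j = 1 near the diagonal. -/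
open scoped Manifold Topology

section Aux
open Set Function TopologicalSpace


theorem sigmaCompact_of_connected {X : Type*} [TopologicalSpace X] [T2Space X]
    [WeaklyLocallyCompactSpace X] [ParacompactSpace X] [ConnectedSpace X] :
    SigmaCompactSpace X := by
  cases isEmpty_or_nonempty X with
  | inl h => infer_instance
  | inr h =>
    obtain ⟨x₀⟩ := h
    choose K hKc hKn using fun x : X => exists_compact_mem_nhds x
    obtain ⟨v, hvo, hvU, hvlf, hvsub⟩ := precise_refinement (fun x => interior (K x))
      (fun _ => isOpen_interior)
      (eq_univ_of_forall fun x => mem_iUnion.2 ⟨x, mem_interior_iff_mem_nhds.2 (hKn x)⟩)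
    have hcl : ∀ x, IsCompact (closure (v x)) := fun x =>
      (hKc x).of_isClosed_subset isClosed_closure
        (closure_minimal ((hvsub x).trans interior_subset) (hKc x).isClosed)
    let F : ℕ → Set X := fun n =>
      Nat.rec {x₀} (fun _ Fn => ⋃ a ∈ {a | (v a ∩ Fn).Nonempty}, closure (v a)) n
    have hF0 : F 0 = {x₀} := rfl
    have hFs : ∀ n, F (n + 1) = ⋃ a ∈ {a | (v a ∩ F n).Nonempty}, closure (v a) := fun n => rfl
    have hFc : ∀ n, IsCompact (F n) := by
      intro n
      induction n with
      | zero => exact isCompact_singleton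
      | succ n ih =>
        rw [hFs]
        exact (hvlf.finite_nonempty_inter_compact ih).isCompact_biUnion fun a _ => hcl a
    set G : ℕ → Set X := fun n => ⋃ a ∈ {a | (v a ∩ F n).Nonempty}, v a with hG
    have hGo : ∀ n, IsOpen (G n) := fun n => isOpen_biUnion fun a _ => hvo a
    have hFG : ∀ n, F n ⊆ G n := by
      intro n y hy
      obtain ⟨a, ha⟩ := mem_iUnion.1 (hvU ▸ mem_univ y : y ∈ ⋃ a, v a)
      exact mem_biUnion ⟨y, ha, hy⟩ ha
    have hGF : ∀ n, G n ⊆ F (n + 1) := fun n =>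
      (iUnion₂_mono fun a _ => subset_closure).trans (hFs n ▸ Subset.rfl)
    have hkey : (⋃ n, F n) = ⋃ n, G n := by
      apply Subset.antisymm (iUnion_mono hFG)
      exact iUnion_subset fun n => (hGF n).trans (subset_iUnion F (n + 1))
    have hclopen : IsClopen (⋃ n, F n) := by
      constructor
      · rw [← closure_eq_iff_isClosed]
        apply Subset.antisymm _ subset_closure
        intro y hy
        obtain ⟨a, ha⟩ := mem_iUnion.1 (hvU ▸ mem_univ y : y ∈ ⋃ a, v a)
        have hne : (v a ∩ ⋃ n, F n).Nonempty := mem_closure_iff.1 hy (v a) (hvo a) ha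
        obtain ⟨z, hz1, hz2⟩ := hne
        obtain ⟨n, hn⟩ := mem_iUnion.1 hz2
        have hmem : a ∈ {a | (v a ∩ F n).Nonempty} := ⟨z, hz1, hn⟩
        have : v a ⊆ F (n + 1) := (subset_biUnion_of_mem hmem).trans (hGF n)
        exact mem_iUnion.2 ⟨n + 1, this ha⟩
      · rw [hkey]; exact isOpen_iUnion hGo
    have huniv : (⋃ n, F n) = univ :=
      hclopen.eq_univ ⟨x₀, mem_iUnion.2 ⟨0, rfl⟩⟩
    exact ⟨⟨F, hFc, huniv⟩⟩


theorem glue_component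
    {m : ℕ} {M : Type*} [TopologicalSpace M]
    [ChartedSpace (EuclideanSpace ℝ (Fin m)) M]
    [IsManifold (𝓡 m) (⊤ : ℕ∞) M] [T2Space M] [ParacompactSpace M]
    {𝔼 : Type*} [NormedAddCommGroup 𝔼] [NormedSpace ℝ 𝔼] [FiniteDimensional ℝ 𝔼]
    (U : Set M) (hU : IsOpen U) {ι : Type*} (Uc : ι → Set M)
    (hUc : ∀ i, IsOpen (Uc i)) (hcover : U = ⋃ i, Uc i)
    (A : ι → ℝ → M × M → (𝔼 →L[ℝ] 𝔼))
    (hA : ∀ i, ∀ ε ∈ Set.Ioc (0 : ℝ) 1,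
        ContMDiffOn ((𝓡 m).prod (𝓡 m)) 𝓘(ℝ, 𝔼 →L[ℝ] 𝔼) (⊤ : ℕ∞) (A i ε) (Uc i ×ˢ Uc i))
    (hcomp : ∀ i j, ∀ x ∈ Uc i ∩ Uc j, ∃ Z, IsOpen Z ∧ x ∈ Z ∧ Z ⊆ Uc i ∩ Uc j ∧
        ∃ ε₀ > (0 : ℝ), ∀ ε ∈ Set.Ioo (0 : ℝ) ε₀, ∀ p ∈ Z ×ˢ Z, A i ε p = A j ε p)
    (x₀ : M) :
    ∃ B : ℝ → M × M → (𝔼 →L[ℝ] 𝔼),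
      (∀ ε ∈ Set.Ioc (0 : ℝ) 1,
        ContMDiffOn ((𝓡 m).prod (𝓡 m)) 𝓘(ℝ, 𝔼 →L[ℝ] 𝔼) (⊤ : ℕ∞) (B ε)
          ((U ∩ connectedComponent x₀) ×ˢ (U ∩ connectedComponent x₀))) ∧
      (∀ i, ∀ x ∈ Uc i ∩ (U ∩ connectedComponent x₀), ∃ Z, IsOpen Z ∧ x ∈ Z ∧
        Z ⊆ Uc i ∩ (U ∩ connectedComponent x₀) ∧ ∃ ε₀ > (0 : ℝ),
        ∀ ε ∈ Set.Ioo (0 : ℝ) ε₀, ∀ p ∈ Z ×ˢ Z, B ε p = A i ε p) := by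
  classical
  -- basic instances on M
  haveI : LocallyCompactSpace M :=
    ChartedSpace.locallyCompactSpace (EuclideanSpace ℝ (Fin m)) M
  haveI : LocallyConnectedSpace M :=
    ChartedSpace.locallyConnectedSpace (EuclideanSpace ℝ (Fin m)) M
  set C : Set M := connectedComponent x₀ with hC
  have hCo : IsOpen C := isOpen_connectedComponent
  have hCc : IsClosed C := isClosed_connectedComponent
  set W : Set M := U ∩ C with hWdef
  have hWo : IsOpen W := hU.inter hCo
  have hWU : W ⊆ U := inter_subset_left
  -- σ-compactness of the component
  haveI : ConnectedSpace ↥C := Subtype.connectedSpace isConnected_connectedComponent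
  haveI : LocallyCompactSpace ↥C := hCo.locallyCompactSpace
  haveI : ParacompactSpace ↥C := hCc.isClosedEmbedding_subtypeVal.paracompactSpace
  haveI : SigmaCompactSpace ↥C := sigmaCompact_of_connected
  haveI : ChartedSpace (EuclideanSpace ℝ (Fin m)) ↥C :=
    (⟨C, hCo⟩ : Opens M).instChartedSpace
  haveI : SecondCountableTopology ↥C :=
    ChartedSpace.secondCountable_of_sigmaCompact (EuclideanSpace ℝ (Fin m)) ↥C
  -- σ-compactness of W and of W ×ˢ W
  haveI : SecondCountableTopology ↥W :=
    (Topology.IsEmbedding.inclusion (inter_subset_right : W ⊆ C)).secondCountableTopology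
  haveI : LocallyCompactSpace ↥W := hWo.locallyCompactSpace
  haveI : SigmaCompactSpace ↥W := inferInstance
  haveI hsig : SigmaCompactSpace ↥(W ×ˢ W : Set (M × M)) := by
    rw [← isSigmaCompact_univ_iff] at *
    have := (isSigmaCompact_range (Homeomorph.Set.prod W W).symm.continuous)
    simpa [Set.range_eq_univ.2 (Homeomorph.Set.prod W W).symm.surjective] using this
  -- the product manifold piece
  set Ω : Opens (M × M) := ⟨W ×ˢ W, hWo.prod hWo⟩ with hΩdef
  haveI : SigmaCompactSpace ↥Ω := hsig
  set diag : Set ↥Ω := {q | (q : M × M).1 = (q : M × M).2} with hdiagdef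
  have hdiagc : IsClosed diag :=
    isClosed_eq (continuous_fst.comp continuous_subtype_val)
      (continuous_snd.comp continuous_subtype_val)
  set O : ι → Set ↥Ω := fun j => Subtype.val ⁻¹' (Uc j ×ˢ Uc j) with hOdef
  have hOo : ∀ j, IsOpen (O j) := fun j =>
    ((hUc j).prod (hUc j)).preimage continuous_subtype_val
  have hdsub : diag ⊆ ⋃ j, O j := by
    intro q hq
    have hq1 : (q : M × M).1 ∈ U := (q.2 : (q : M × M) ∈ W ×ˢ W).1.1
    rw [hcover] at hq1
    obtain ⟨j, hj⟩ := mem_iUnion.1 hq1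
    exact mem_iUnion.2 ⟨j, ⟨hj, by rw [← show (q : M × M).1 = (q : M × M).2 from hq]; exact hj⟩⟩
  obtain ⟨O', hO'o, hdO', hclO'⟩ :=
    normal_exists_closure_subset hdiagc (isOpen_iUnion hOo) hdsub
  obtain ⟨f, hf⟩ := SmoothPartitionOfUnity.exists_isSubordinate
    ((𝓡 m).prod (𝓡 m)) (isClosed_closure (s := O')) O hOo hclO'
  refine ⟨fun ε p => if h : p ∈ (W ×ˢ W : Set (M × M)) then
      ∑ᶠ j, f j (⟨p, h⟩ : ↥Ω) • A j ε p else 0, ?_, ?_⟩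
  · -- smoothness
    intro ε hε
    have hG : ContMDiff ((𝓡 m).prod (𝓡 m)) 𝓘(ℝ, 𝔼 →L[ℝ] 𝔼) (⊤ : ℕ∞)
        (fun q : ↥Ω => ∑ᶠ j, f j q • A j ε (q : M × M)) := by
      apply f.contMDiff_finsum_smul
      intro j q hq
      have hqO : q ∈ O j := hf j hq
      exact (((hA j ε hε).comp (contMDiff_subtype_val.contMDiffOn)
        (fun r hr => hr)).contMDiffAt ((hOo j).mem_nhds hqO))
    intro p hp
    apply ContMDiffAt.contMDiffWithinAt
    have hiff := contMDiffAt_subtype_iff (I := (𝓡 m).prod (𝓡 m))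
      (I' := 𝓘(ℝ, 𝔼 →L[ℝ] 𝔼)) (n := (⊤ : ℕ∞)) (U := Ω)
      (f := fun p => if h : p ∈ (W ×ˢ W : Set (M × M)) then
        ∑ᶠ j, f j (⟨p, h⟩ : ↥Ω) • A j ε p else 0) (x := ⟨p, hp⟩)
    apply hiff.mp
    have heq : (fun q : ↥Ω => if h : (q : M × M) ∈ (W ×ˢ W : Set (M × M)) then
        ∑ᶠ j, f j (⟨(q : M × M), h⟩ : ↥Ω) • A j ε (q : M × M) else 0)
        = fun q : ↥Ω => ∑ᶠ j, f j q • A j ε (q : M × M) := by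
      funext q
      exact dif_pos (show (q : M × M) ∈ (W ×ˢ W : Set (M × M)) from q.2)
    rw [heq]
    exact hG ⟨p, hp⟩
  · -- local agreement
    intro i x hx
    have hxU : x ∈ Uc i := hx.1
    have hxW : x ∈ W := hx.2
    set q₀ : ↥Ω := ⟨(x, x), ⟨hxW, hxW⟩⟩ with hq₀def
    have hq₀O' : q₀ ∈ O' := hdO' (show ((x, x) : M × M).1 = ((x, x) : M × M).2 from rfl)
    obtain ⟨V₀, hV₀, hV₀fin⟩ := f.locallyFinite q₀
    have Hch : ∀ j : ι, ∃ Z εj, 0 < εj ∧ (q₀ ∈ tsupport ⇑(f j) →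
        IsOpen Z ∧ x ∈ Z ∧ Z ⊆ Uc i ∩ Uc j ∧
        ∀ ε ∈ Set.Ioo (0 : ℝ) εj, ∀ p ∈ Z ×ˢ Z, A i ε p = A j ε p) := by
      intro j
      by_cases hj : q₀ ∈ tsupport ⇑(f j)
      · have hxj : x ∈ Uc j := (hf j hj : (q₀ : M × M) ∈ Uc j ×ˢ Uc j).1
        obtain ⟨Z, hZo, hxZ, hZsub, ε₁, hε₁, hag⟩ := hcomp i j x ⟨hxU, hxj⟩
        exact ⟨Z, ε₁, hε₁, fun _ => ⟨hZo, hxZ, hZsub, hag⟩⟩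
      · exact ⟨∅, 1, one_pos, fun h => absurd h hj⟩
    choose Zc εc hεc hZc using Hch
    set J : Finset ι := hV₀fin.toFinset with hJdef
    set Jg : Finset ι := J.filter (fun j => q₀ ∈ tsupport ⇑(f j)) with hJgdef
    set Jb : Finset ι := J.filter (fun j => q₀ ∉ tsupport ⇑(f j)) with hJbdef
    set Y : Set ↥Ω := O' ∩ interior V₀ ∩ ⋂ j ∈ Jb, (tsupport ⇑(f j))ᶜ with hYdef
    have hYo : IsOpen Y := (hO'o.inter isOpen_interior).inter
      (isOpen_biInter_finset fun j _ => (isClosed_tsupport _).isOpen_compl)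
    have hq₀Y : q₀ ∈ Y := ⟨⟨hq₀O', mem_interior_iff_mem_nhds.2 hV₀⟩,
      mem_iInter₂.2 fun j hj => (Finset.mem_filter.1 hj).2⟩
    have hYM : IsOpen (Subtype.val '' Y : Set (M × M)) :=
      (hWo.prod hWo).isOpenMap_subtype_val Y hYo
    have h_xx : ((x, x) : M × M) ∈ Subtype.val '' Y := ⟨q₀, hq₀Y, rfl⟩
    obtain ⟨u, v, huo, hvo2, hxu, hxv, huv⟩ := isOpen_prod_iff.1 hYM x x h_xx
    set Z : Set M := ((u ∩ v) ∩ (Uc i ∩ W)) ∩ ⋂ j ∈ Jg, Zc j with hZdef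
    have hZo : IsOpen Z := (((huo.inter hvo2).inter ((hUc i).inter hWo))).inter
      (isOpen_biInter_finset fun j hj => (hZc j (Finset.mem_filter.1 hj).2).1)
    have hxZ : x ∈ Z := ⟨⟨⟨hxu, hxv⟩, ⟨hxU, hxW⟩⟩,
      mem_iInter₂.2 fun j hj => (hZc j (Finset.mem_filter.1 hj).2).2.1⟩
    have hZsub : Z ⊆ Uc i ∩ W := fun y hy => hy.1.2
    have hne : ((insert (1 : ℝ) (Jg.image εc))).Nonempty := ⟨1, Finset.mem_insert_self _ _⟩
    set ε₀ : ℝ := (insert (1 : ℝ) (Jg.image εc)).min' hne with hε₀def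
    have hε₀pos : 0 < ε₀ := by
      have hmem := Finset.min'_mem _ hne
      rw [Finset.mem_insert] at hmem
      rcases hmem with h | h
      · rw [← hε₀def] at h; rw [h]; exact one_pos
      · obtain ⟨j, _, hj⟩ := Finset.mem_image.1 h
        rw [← hε₀def] at hj; rw [← hj]; exact hεc j
    have hε₀le : ∀ j ∈ Jg, ε₀ ≤ εc j := fun j hj =>
      Finset.min'_le _ _ (Finset.mem_insert_of_mem (Finset.mem_image_of_mem εc hj))
    refine ⟨Z, hZo, hxZ, hZsub, ε₀, hε₀pos, ?_⟩
    intro ε hε p hp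
    have hpW : p ∈ (W ×ˢ W : Set (M × M)) := ⟨(hZsub hp.1).2, (hZsub hp.2).2⟩
    set q : ↥Ω := ⟨p, hpW⟩ with hqdef
    have hqY : q ∈ Y := by
      have hpY : p ∈ (Subtype.val '' Y : Set (M × M)) :=
        huv ⟨hp.1.1.1.1, hp.2.1.1.2⟩
      obtain ⟨q', hq', hq'eq⟩ := hpY
      rwa [show q' = q from Subtype.ext hq'eq] at hq'
    show (if h : p ∈ (W ×ˢ W : Set (M × M)) then
      ∑ᶠ j, f j (⟨p, h⟩ : ↥Ω) • A j ε p else 0) = A i ε p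
    rw [dif_pos hpW]
    have hterm : ∀ j, f j q • A j ε p = f j q • A i ε p := by
      intro j
      by_cases h0 : f j q = 0
      · rw [h0, zero_smul, zero_smul]
      · have hjsupp : q ∈ support ⇑(f j) := h0
        have hjJ : j ∈ J := hV₀fin.mem_toFinset.2 ⟨q, hjsupp, interior_subset hqY.1.2⟩
        have hjts : q₀ ∈ tsupport ⇑(f j) := by
          by_contra hnot
          have hjb : j ∈ Jb := Finset.mem_filter.2 ⟨hjJ, hnot⟩
          exact (mem_iInter₂.1 hqY.2 j hjb) (subset_tsupport _ hjsupp)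
        have hjg : j ∈ Jg := Finset.mem_filter.2 ⟨hjJ, hjts⟩
        obtain ⟨_, _, _, hag⟩ := hZc j hjts
        rw [hag ε ⟨hε.1, lt_of_lt_of_le hε.2 (hε₀le j hjg)⟩ p
          ⟨mem_iInter₂.1 hp.1.2 j hjg, mem_iInter₂.1 hp.2.2 j hjg⟩]
    rw [finsum_congr hterm]
    have hfin : (support fun j => f j q).Finite := f.locallyFinite.point_finite q
    rw [← finsum_smul' hfin, f.sum_eq_one (subset_closure hqY.1.1), one_smul]

theorem transport_operator_sheafAUX
    {m : ℕ} {M : Type*} [TopologicalSpace M]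
    [ChartedSpace (EuclideanSpace ℝ (Fin m)) M]
    [IsManifold (𝓡 m) (⊤ : ℕ∞) M] [T2Space M] [ParacompactSpace M]
    {𝔼 : Type*} [NormedAddCommGroup 𝔼] [NormedSpace ℝ 𝔼] [FiniteDimensional ℝ 𝔼]
    (U : Set M) (hU : IsOpen U) {ι : Type*} (Uc : ι → Set M)
    (hUc : ∀ i, IsOpen (Uc i)) (hcover : U = ⋃ i, Uc i) :
    (∀ A : ℝ → M × M → (𝔼 →L[ℝ] 𝔼),
      (∀ ε ∈ Set.Ioc (0 : ℝ) 1,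
        ContMDiffOn ((𝓡 m).prod (𝓡 m)) 𝓘(ℝ, 𝔼 →L[ℝ] 𝔼) (⊤ : ℕ∞) (A ε) (U ×ˢ U)) →
      (∀ i, ∀ x ∈ Uc i, ∃ Z, IsOpen Z ∧ x ∈ Z ∧ Z ⊆ Uc i ∧ ∃ ε₀ > (0 : ℝ),
        ∀ ε ∈ Set.Ioo (0 : ℝ) ε₀, ∀ p ∈ Z ×ˢ Z, A ε p = 0) →
      ∀ x ∈ U, ∃ Z, IsOpen Z ∧ x ∈ Z ∧ Z ⊆ U ∧ ∃ ε₀ > (0 : ℝ),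
        ∀ ε ∈ Set.Ioo (0 : ℝ) ε₀, ∀ p ∈ Z ×ˢ Z, A ε p = 0) ∧
    (∀ A : ι → ℝ → M × M → (𝔼 →L[ℝ] 𝔼),
      (∀ i, ∀ ε ∈ Set.Ioc (0 : ℝ) 1,
        ContMDiffOn ((𝓡 m).prod (𝓡 m)) 𝓘(ℝ, 𝔼 →L[ℝ] 𝔼) (⊤ : ℕ∞) (A i ε)
          (Uc i ×ˢ Uc i)) →
      (∀ i j, ∀ x ∈ Uc i ∩ Uc j, ∃ Z, IsOpen Z ∧ x ∈ Z ∧ Z ⊆ Uc i ∩ Uc j ∧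
        ∃ ε₀ > (0 : ℝ), ∀ ε ∈ Set.Ioo (0 : ℝ) ε₀, ∀ p ∈ Z ×ˢ Z, A i ε p = A j ε p) →
      ∃ A' : ℝ → M × M → (𝔼 →L[ℝ] 𝔼),
        (∀ ε ∈ Set.Ioc (0 : ℝ) 1,
          ContMDiffOn ((𝓡 m).prod (𝓡 m)) 𝓘(ℝ, 𝔼 →L[ℝ] 𝔼) (⊤ : ℕ∞) (A' ε) (U ×ˢ U)) ∧
        ∀ i, ∀ x ∈ Uc i, ∃ Z, IsOpen Z ∧ x ∈ Z ∧ Z ⊆ Uc i ∧ ∃ ε₀ > (0 : ℝ),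
          ∀ ε ∈ Set.Ioo (0 : ℝ) ε₀, ∀ p ∈ Z ×ˢ Z, A' ε p = A i ε p) := by
  classical
  have hUcU : ∀ i, Uc i ⊆ U := fun i => hcover ▸ subset_iUnion Uc i
  constructor
  · -- (a) separatedness
    intro A _ hloc x hx
    rw [hcover] at hx
    obtain ⟨i, hxi⟩ := mem_iUnion.1 hx
    obtain ⟨Z, hZo, hxZ, hZsub, ε₀, hε₀, hag⟩ := hloc i x hxi
    exact ⟨Z, hZo, hxZ, hZsub.trans (hUcU i), ε₀, hε₀, hag⟩
  · -- (b) gluing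
    intro A hA hcomp
    haveI : LocallyConnectedSpace M :=
      ChartedSpace.locallyConnectedSpace (EuclideanSpace ℝ (Fin m)) M
    -- canonical per-component glued nets
    have key2 : ∀ D : Set M, ∃ B : ℝ → M × M → (𝔼 →L[ℝ] 𝔼),
        ∀ y₀ : M, D = connectedComponent y₀ →
        ((∀ ε ∈ Set.Ioc (0 : ℝ) 1,
          ContMDiffOn ((𝓡 m).prod (𝓡 m)) 𝓘(ℝ, 𝔼 →L[ℝ] 𝔼) (⊤ : ℕ∞) (B ε)
            ((U ∩ D) ×ˢ (U ∩ D))) ∧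
        (∀ i, ∀ x ∈ Uc i ∩ (U ∩ D), ∃ Z, IsOpen Z ∧ x ∈ Z ∧
          Z ⊆ Uc i ∩ (U ∩ D) ∧ ∃ ε₀ > (0 : ℝ),
          ∀ ε ∈ Set.Ioo (0 : ℝ) ε₀, ∀ p ∈ Z ×ˢ Z, B ε p = A i ε p)) := by
      intro D
      by_cases hD : ∃ y₀ : M, D = connectedComponent y₀
      · obtain ⟨y₀, rfl⟩ := hD
        obtain ⟨B, hB1, hB2⟩ := glue_component U hU Uc hUc hcover A hA hcomp y₀
        refine ⟨B, fun z₀ hz => ?_⟩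
        rw [hz] at hB1 hB2 ⊢
        exact ⟨hB1, hB2⟩
      · exact ⟨0, fun y₀ hy => absurd ⟨y₀, hy⟩ hD⟩
    choose Bc hBc using key2
    set A' : ℝ → M × M → (𝔼 →L[ℝ] 𝔼) := fun ε p =>
      if p.1 ∈ U ∧ p.2 ∈ U ∧ p.2 ∈ connectedComponent p.1 then
        Bc (connectedComponent p.1) ε p else 0 with hA'def
    refine ⟨A', ?_, ?_⟩
    · -- smoothness
      intro ε hε
      apply contMDiffOn_of_locally_contMDiffOn
      intro p hp
      have hp1 : p.1 ∈ U := hp.1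
      have hp2 : p.2 ∈ U := hp.2
      by_cases hpc : p.2 ∈ connectedComponent p.1
      · refine ⟨(U ∩ connectedComponent p.1) ×ˢ (U ∩ connectedComponent p.1),
          (hU.inter isOpen_connectedComponent).prod (hU.inter isOpen_connectedComponent),
          ⟨⟨hp1, mem_connectedComponent⟩, ⟨hp2, hpc⟩⟩, ?_⟩
        have hsm := (hBc (connectedComponent p.1) p.1 rfl).1 ε hε
        apply (hsm.mono inter_subset_right).congr
        intro r hr
        have hr1 : r.1 ∈ U ∩ connectedComponent p.1 := hr.2.1
        have hr2 : r.2 ∈ U ∩ connectedComponent p.1 := hr.2.2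
        have hcc : connectedComponent r.1 = connectedComponent p.1 :=
          (connectedComponent_eq hr1.2).symm
        show A' ε r = Bc (connectedComponent p.1) ε r
        rw [hA'def]
        simp only [if_pos (show r.1 ∈ U ∧ r.2 ∈ U ∧ r.2 ∈ connectedComponent r.1 from
          ⟨hr1.1, hr2.1, hcc ▸ hr2.2⟩), hcc]
        exact if_pos ⟨hr1.1, hr2.1, hr2.2⟩
      · refine ⟨(U ∩ connectedComponent p.1) ×ˢ (U ∩ connectedComponent p.2),
          (hU.inter isOpen_connectedComponent).prod (hU.inter isOpen_connectedComponent),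
          ⟨⟨hp1, mem_connectedComponent⟩, ⟨hp2, mem_connectedComponent⟩⟩, ?_⟩
        apply contMDiffOn_const.congr
        intro r hr
        have hr1 : r.1 ∈ U ∩ connectedComponent p.1 := hr.2.1
        have hr2 : r.2 ∈ U ∩ connectedComponent p.2 := hr.2.2
        show A' ε r = 0
        rw [hA'def]
        apply if_neg
        rintro ⟨-, -, hrc⟩
        have hcc : connectedComponent r.1 = connectedComponent p.1 :=
          (connectedComponent_eq hr1.2).symm
        rw [hcc] at hrc
        have : connectedComponent p.2 = connectedComponent p.1 :=
          (connectedComponent_eq hr2.2).trans (connectedComponent_eq hrc).symm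
        exact hpc (this ▸ mem_connectedComponent)
    · -- local agreement
      intro i x hx
      have hxU : x ∈ U := hUcU i hx
      obtain ⟨Z, hZo, hxZ, hZsub, ε₀, hε₀, hag⟩ :=
        (hBc (connectedComponent x) x rfl).2 i x ⟨hx, hxU, mem_connectedComponent⟩
      refine ⟨Z, hZo, hxZ, hZsub.trans inter_subset_left, ε₀, hε₀, ?_⟩
      intro ε hε p hp
      have hp1 : p.1 ∈ Uc i ∩ (U ∩ connectedComponent x) := hZsub hp.1
      have hp2 : p.2 ∈ Uc i ∩ (U ∩ connectedComponent x) := hZsub hp.2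
      have hcc : connectedComponent p.1 = connectedComponent x :=
        (connectedComponent_eq hp1.2.2).symm
      have : A' ε p = Bc (connectedComponent x) ε p := by
        rw [hA'def]
        simp only [if_pos (show p.1 ∈ U ∧ p.2 ∈ U ∧ p.2 ∈ connectedComponent p.1 from
          ⟨hp1.2.1, hp2.2.1, hcc ▸ hp2.2.2⟩), hcc]
        exact if_pos ⟨hp1.2.1, hp2.2.1, hp2.2.2⟩
      rw [this, hag ε hε p hp]

end Aux

/-- Proposition 3.18: nets of transport operators modulo local eventual equality form
a sheaf.  Transport operators on `U` are modeled as smooth maps `U × U → Lin(𝔼,𝔼)`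
(sections of `E ⊠ E*` in a trivialization); a net is indexed by `ε ∈ (0,1]`.
(a) If `A ∼ 0` on each member of an open cover of `U` then `A ∼ 0` on `U`.
(b) Compatible families on an open cover glue: given `A_i` with `A_i ∼ A_j` on
`U_i ∩ U_j`, there is a net `A` on `U` with `A|_{U_i} ∼ A_i` for all `i`. -/
theorem transport_operator_sheaf
    {m : ℕ} {M : Type*} [TopologicalSpace M]
    [ChartedSpace (EuclideanSpace ℝ (Fin m)) M]
    [IsManifold (𝓡 m) (⊤ : ℕ∞) M] [T2Space M] [ParacompactSpace M]
    {𝔼 : Type*} [NormedAddCommGroup 𝔼] [NormedSpace ℝ 𝔼] [FiniteDimensional ℝ 𝔼]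
    (U : Set M) (hU : IsOpen U) {ι : Type*} (Uc : ι → Set M)
    (hUc : ∀ i, IsOpen (Uc i)) (hcover : U = ⋃ i, Uc i) :
    -- (a) separatedness
    (∀ A : ℝ → M × M → (𝔼 →L[ℝ] 𝔼),
      (∀ ε ∈ Set.Ioc (0 : ℝ) 1,
        ContMDiffOn ((𝓡 m).prod (𝓡 m)) 𝓘(ℝ, 𝔼 →L[ℝ] 𝔼) (⊤ : ℕ∞) (A ε) (U ×ˢ U)) →
      (∀ i, ∀ x ∈ Uc i, ∃ Z, IsOpen Z ∧ x ∈ Z ∧ Z ⊆ Uc i ∧ ∃ ε₀ > (0 : ℝ),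
        ∀ ε ∈ Set.Ioo (0 : ℝ) ε₀, ∀ p ∈ Z ×ˢ Z, A ε p = 0) →
      ∀ x ∈ U, ∃ Z, IsOpen Z ∧ x ∈ Z ∧ Z ⊆ U ∧ ∃ ε₀ > (0 : ℝ),
        ∀ ε ∈ Set.Ioo (0 : ℝ) ε₀, ∀ p ∈ Z ×ˢ Z, A ε p = 0) ∧
    -- (b) gluing
    (∀ A : ι → ℝ → M × M → (𝔼 →L[ℝ] 𝔼),
      (∀ i, ∀ ε ∈ Set.Ioc (0 : ℝ) 1,
        ContMDiffOn ((𝓡 m).prod (𝓡 m)) 𝓘(ℝ, 𝔼 →L[ℝ] 𝔼) (⊤ : ℕ∞) (A i ε)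
          (Uc i ×ˢ Uc i)) →
      (∀ i j, ∀ x ∈ Uc i ∩ Uc j, ∃ Z, IsOpen Z ∧ x ∈ Z ∧ Z ⊆ Uc i ∩ Uc j ∧
        ∃ ε₀ > (0 : ℝ), ∀ ε ∈ Set.Ioo (0 : ℝ) ε₀, ∀ p ∈ Z ×ˢ Z, A i ε p = A j ε p) →
      ∃ A' : ℝ → M × M → (𝔼 →L[ℝ] 𝔼),
        (∀ ε ∈ Set.Ioc (0 : ℝ) 1,
          ContMDiffOn ((𝓡 m).prod (𝓡 m)) 𝓘(ℝ, 𝔼 →L[ℝ] 𝔼) (⊤ : ℕ∞) (A' ε) (U ×ˢ U)) ∧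
        ∀ i, ∀ x ∈ Uc i, ∃ Z, IsOpen Z ∧ x ∈ Z ∧ Z ⊆ Uc i ∧ ∃ ε₀ > (0 : ℝ),
          ∀ ε ∈ Set.Ioo (0 : ℝ) ε₀, ∀ p ∈ Z ×ˢ Z, A' ε p = A i ε p) :=
  transport_operator_sheafAUX U hU Uc hUc hcover
end

section
/- Let Ω ⊆ ℝⁿ be open and 𝔼 a finite-dimensional real vector space. Call a net a = (a_ε) of smooth maps Ω × Ω → Lin(𝔼,𝔼) admissible if (i) every x ∈ Ω has a neighborhood V and ε₀ with {a_ε|_{V×V} : ε < ε₀} bounded in C^∞(V×V, Lin(𝔼,𝔼)), and (ii) for every compact K ⊆ Ω, l ∈ ℕ₀, m ∈ ℕ: sup_{x∈K} ‖D_x^l(a_ε(x,x) − id_𝔼)‖ = O(ε^m). If λ is a homogeneous functor induced by a multilinear map, i.e. λ(a)(x,y) = h(a(x,y),…,a(x,y)) (n slots) for a multilinear h : Lin(𝔼,𝔼)ⁿ → Lin(λ𝔼, λ𝔼) with h(id,…,id) = id_{λ𝔼}, then λ(a) is again admissible (as a net valued in Lin(λ𝔼, λ𝔼)). -/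
open Set Metric

lemma multilinear_cont {M V : Type*} [NormedAddCommGroup M] [NormedSpace ℝ M]
    [FiniteDimensional ℝ M] [NormedAddCommGroup V] [NormedSpace ℝ V] {N : ℕ}
    (h : MultilinearMap ℝ (fun _ : Fin N => M) V) : Continuous h := by
  classical
  set D := Module.finrank ℝ M
  set b := Module.finBasis ℝ M
  have hrepr : ⇑h = fun m : Fin N → M =>
      ∑ r : Fin N → Fin D, (∏ i, b.repr (m i) (r i)) • h (fun i => b (r i)) := by
    funext m
    have hm : h m = h (fun i => ∑ j, b.repr (m i) j • b j) := by
      congr 1; funext i; exact (b.sum_repr (m i)).symm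
    rw [hm, h.map_sum]
    exact Finset.sum_congr rfl fun r _ => h.map_smul_univ _ _
  rw [hrepr]
  refine continuous_finset_sum _ fun r _ => Continuous.smul ?_ continuous_const
  refine continuous_finset_prod _ fun i _ => ?_
  have : (fun m : Fin N → M => b.repr (m i) (r i)) =
      fun m => (b.coord (r i)) (m i) := by funext m; simp [Module.Basis.coord_apply]
  rw [this]
  exact (b.coord (r i)).continuous_of_finiteDimensional.comp (continuous_apply i)

lemma deriv_bound_on_ball {M V : Type*} [NormedAddCommGroup M] [NormedSpace ℝ M]
    [FiniteDimensional ℝ M] [NormedAddCommGroup V] [NormedSpace ℝ V]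
    (G : M → V) (hG : ContDiff ℝ (⊤ : ℕ∞) G) (l : ℕ) (R : ℝ) :
    ∃ C, 0 ≤ C ∧ ∀ i ≤ l, ∀ u ∈ closedBall (0 : M) R, ‖iteratedFDeriv ℝ i G u‖ ≤ C := by
  have hcompact : IsCompact (closedBall (0 : M) R) := isCompact_closedBall _ _
  have hcont : ∀ i : ℕ, Continuous (iteratedFDeriv ℝ i G) := fun i =>
    hG.continuous_iteratedFDeriv (by exact_mod_cast le_top)
  choose C hC using fun i : ℕ =>
    hcompact.exists_bound_of_continuousOn (hcont i).continuousOn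
  refine ⟨∑ i ∈ Finset.range (l + 1), max (C i) 0, ?_, fun i hi u hu => ?_⟩
  · exact Finset.sum_nonneg fun _ _ => le_max_right _ _
  · calc ‖iteratedFDeriv ℝ i G u‖ ≤ C i := hC i u hu
      _ ≤ max (C i) 0 := le_max_left _ _
      _ ≤ _ := Finset.single_le_sum (fun j _ => le_max_right (C j) 0)
        (Finset.mem_range.2 (by omega))

lemma le_one_add_sum_max (c : ℕ → ℝ) {i l : ℕ} (hi : i ≤ l) :
    c i ≤ 1 + ∑ j ∈ Finset.range (l + 1), max (c j) 0 := by
  have h1 : c i ≤ ∑ j ∈ Finset.range (l + 1), max (c j) 0 :=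
    le_trans (le_max_left _ _)
      (Finset.single_le_sum (fun j _ => le_max_right (c j) 0)
        (Finset.mem_range.2 (by omega)))
  linarith

lemma one_add_sum_max_nonneg (c : ℕ → ℝ) (l : ℕ) :
    (1 : ℝ) ≤ 1 + ∑ j ∈ Finset.range (l + 1), max (c j) 0 := by
  have : (0:ℝ) ≤ ∑ j ∈ Finset.range (l + 1), max (c j) 0 :=
    Finset.sum_nonneg fun _ _ => le_max_right _ _
  linarith

/-- Admissible nets of transport operators on `Ω ⊆ ℝⁿ` with values in `Lin(𝔼,𝔼)`
(Definition 3.7, with identity element `e`): (0) each member is smooth on `Ω × Ω`;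
(i) local boundedness in `C^∞` uniformly for small `ε`; (ii) on the diagonal, all
derivatives of `a_ε(x,x) − e` are `O(ε^m)` for every `m`, uniformly on compacta. -/
def AdmissibleNet {G 𝔽 : Type*} [NormedAddCommGroup G] [NormedSpace ℝ G]
    [NormedAddCommGroup 𝔽] [NormedSpace ℝ 𝔽]
    (Ω : Set G) (a : ℝ → G → G → 𝔽) (e : 𝔽) : Prop :=
  (∀ ε ∈ Set.Ioc (0 : ℝ) 1,
    ContDiffOn ℝ (⊤ : ℕ∞) (fun p : G × G => a ε p.1 p.2) (Ω ×ˢ Ω)) ∧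
  (∀ x ∈ Ω, ∃ V : Set G, IsOpen V ∧ x ∈ V ∧ V ⊆ Ω ∧ ∃ ε₀ > (0 : ℝ),
    ∀ L : Set (G × G), IsCompact L → L ⊆ V ×ˢ V → ∀ l : ℕ, ∃ B : ℝ,
      ∀ ε ∈ Set.Ioo (0 : ℝ) ε₀, ∀ p ∈ L,
        ‖iteratedFDerivWithin ℝ l (fun q : G × G => a ε q.1 q.2) (Ω ×ˢ Ω) p‖ ≤ B) ∧
  (∀ K : Set G, IsCompact K → K ⊆ Ω → ∀ l m : ℕ, ∃ C : ℝ, ∃ ε₀ > (0 : ℝ),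
    ∀ ε ∈ Set.Ioo (0 : ℝ) ε₀, ∀ x ∈ K,
      ‖iteratedFDerivWithin ℝ l (fun z => a ε z z - e) Ω x‖ ≤ C * ε ^ m)

set_option synthInstance.maxHeartbeats 1000000 in
set_option maxHeartbeats 2000000 in
/-- Proposition 3.11 (local case): a homogeneous functor — given by a multilinear map
`h` on `Lin(𝔼,𝔼)` with `h(id,…,id) = id` — maps admissible nets of transport
operators to admissible nets of transport operators. -/
theorem admissible_net_functorial
    {G 𝔼 Λ : Type*} [NormedAddCommGroup G] [NormedSpace ℝ G]
    [NormedAddCommGroup 𝔼] [NormedSpace ℝ 𝔼] [FiniteDimensional ℝ 𝔼]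
    [NormedAddCommGroup Λ] [NormedSpace ℝ Λ] [FiniteDimensional ℝ Λ]
    (Ω : Set G) (hΩ : IsOpen Ω) {N : ℕ}
    (h : MultilinearMap ℝ (fun _ : Fin N => 𝔼 →L[ℝ] 𝔼) (Λ →L[ℝ] Λ))
    (hid : (h fun _ => ContinuousLinearMap.id ℝ 𝔼) = ContinuousLinearMap.id ℝ Λ)
    (a : ℝ → G → G → (𝔼 →L[ℝ] 𝔼))
    (ha : AdmissibleNet Ω a (ContinuousLinearMap.id ℝ 𝔼)) :
    AdmissibleNet Ω (fun ε x y => h fun _ => a ε x y)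
      (ContinuousLinearMap.id ℝ Λ) := by
  classical
  set e : 𝔼 →L[ℝ] 𝔼 := ContinuousLinearMap.id ℝ 𝔼 with he
  set H : ContinuousMultilinearMap ℝ (fun _ : Fin N => 𝔼 →L[ℝ] 𝔼) (Λ →L[ℝ] Λ) :=
    ⟨h, multilinear_cont h⟩ with hH
  have hHapp : ∀ v, H v = h v := fun _ => rfl
  have hΩΩ : UniqueDiffOn ℝ (Ω ×ˢ Ω) := (hΩ.prod hΩ).uniqueDiffOn
  have hUΩ : UniqueDiffOn ℝ Ω := hΩ.uniqueDiffOn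
  -- smoothness of the polynomial maps u ↦ H (s.piecewise (fun _ => u) (fun _ => e))
  have hGsmooth : ∀ s : Finset (Fin N),
      ContDiff ℝ (⊤ : ℕ∞) (fun u : 𝔼 →L[ℝ] 𝔼 =>
        H (s.piecewise (fun _ => u) (fun _ => e))) := by
    intro s
    refine H.contDiff.comp (contDiff_pi.2 fun i => ?_)
    by_cases hi : i ∈ s
    · simpa [Finset.piecewise_eq_of_mem _ _ _ hi] using contDiff_fun_id
    · simpa [Finset.piecewise_eq_of_notMem _ _ _ hi] using contDiff_const
  have hGuniv : ContDiff ℝ (⊤ : ℕ∞) (fun u : 𝔼 →L[ℝ] 𝔼 => H (fun _ => u)) :=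
    H.contDiff.comp (contDiff_pi.2 fun _ => contDiff_id)
  refine ⟨?_, ?_, ?_⟩
  · -- (0) smoothness
    intro ε hε
    exact H.contDiff.comp_contDiffOn (contDiffOn_pi.2 fun _ => ha.1 ε hε)
  · -- (i) local C^∞ bounds
    intro x hx
    obtain ⟨V, hVopen, hxV, hVΩ, ε₀, hε₀, hbnd⟩ := ha.2.1 x hx
    refine ⟨V, hVopen, hxV, hVΩ, min ε₀ 1, by positivity, ?_⟩
    intro L hL hLV l
    choose B hB using fun i : ℕ => hbnd L hL hLV i
    set D : ℝ := 1 + ∑ i ∈ Finset.range (l + 1), max (B i) 0 with hD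
    have hD1 : (1 : ℝ) ≤ D := one_add_sum_max_nonneg B l
    set R : ℝ := max (B 0) 0 with hR
    obtain ⟨C, hC0, hC⟩ :=
      deriv_bound_on_ball (fun u : 𝔼 →L[ℝ] 𝔼 => H (fun _ => u)) hGuniv l R
    refine ⟨l.factorial * C * D ^ l, ?_⟩
    intro ε hε p hp
    have hεΩ : ε ∈ Set.Ioo (0:ℝ) ε₀ := ⟨hε.1, lt_of_lt_of_le hε.2 (min_le_left _ _)⟩
    have hε1 : ε ∈ Set.Ioc (0:ℝ) 1 :=
      ⟨hε.1, le_of_lt (lt_of_lt_of_le hε.2 (min_le_right _ _))⟩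
    have hpΩ : p ∈ Ω ×ˢ Ω := by
      have := hLV hp
      exact ⟨hVΩ this.1, hVΩ this.2⟩
    have hfs : ContDiffOn ℝ (⊤ : ℕ∞) (fun q : G × G => a ε q.1 q.2) (Ω ×ˢ Ω) :=
      ha.1 ε hε1
    have key := norm_iteratedFDerivWithin_comp_le
      (g := fun u : 𝔼 →L[ℝ] 𝔼 => H (fun _ => u))
      (f := fun q : G × G => a ε q.1 q.2) (n := l) (s := Ω ×ˢ Ω) (t := univ)
      (N := ((⊤:ℕ∞) : WithTop ℕ∞)) hGuniv.contDiffOn hfs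
      (by exact_mod_cast le_top) uniqueDiffOn_univ hΩΩ (mapsTo_univ _ _) hpΩ
      (C := C) (D := D)
      (fun i hi => by
        rw [iteratedFDerivWithin_univ]
        refine hC i hi _ ?_
        rw [mem_closedBall_zero_iff]
        have h0 := hB 0 ε hεΩ p hp
        rw [norm_iteratedFDerivWithin_zero] at h0
        exact le_trans h0 (le_max_left _ _))
      (fun i h1i hil => by
        refine le_trans (hB i ε hεΩ p hp) ?_
        refine le_trans (le_one_add_sum_max B hil) ?_
        exact le_self_pow₀ hD1 (by omega))
    exact key

  · -- (ii) diagonal estimates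
    intro K hK hKΩ l m
    choose Cc εf hεf hcb using fun i : ℕ => ha.2.2 K hK hKΩ i m
    set εmin : ℝ := min 1 ((Finset.range (l + 1)).inf' ⟨0, by simp⟩ εf) with hεmin
    have hεminpos : 0 < εmin := by
      refine lt_min one_pos ?_
      exact (Finset.lt_inf'_iff _).2 fun i _ => hεf i
    set D : ℝ := 1 + ∑ i ∈ Finset.range (l + 1), max (Cc i) 0 with hDdef
    have hD1 : (1 : ℝ) ≤ D := one_add_sum_max_nonneg Cc l
    set R : ℝ := max (Cc 0) 0 with hRdef
    choose CG hCG0 hCG using fun s : Finset (Fin N) =>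
      deriv_bound_on_ball (fun u : 𝔼 →L[ℝ] 𝔼 =>
        H (s.piecewise (fun _ => u) (fun _ => e))) (hGsmooth s) l R
    refine ⟨∑ s ∈ (Finset.univ : Finset (Finset (Fin N))).erase ∅,
      (l.factorial * CG s * D ^ l), εmin, hεminpos, ?_⟩
    intro ε hε x hx
    have hxΩ : x ∈ Ω := hKΩ hx
    have hεlt1 : ε < 1 := lt_of_lt_of_le hε.2 (min_le_left _ _)
    have hεi : ∀ i ≤ l, ε ∈ Set.Ioo (0 : ℝ) (εf i) := by
      intro i hi
      refine ⟨hε.1, lt_of_lt_of_le hε.2 ?_⟩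
      exact le_trans (min_le_right _ _)
        (Finset.inf'_le _ (Finset.mem_range.2 (by omega)))
    have hεm_pos : (0 : ℝ) < ε ^ m := pow_pos hε.1 m
    have hεm_ne : (ε : ℝ) ^ m ≠ 0 := ne_of_gt hεm_pos
    have hεm_le1 : (ε : ℝ) ^ m ≤ 1 := pow_le_one₀ hε.1.le hεlt1.le
    -- smoothness of the diagonal difference
    have hcd : ContDiffOn ℝ (⊤ : ℕ∞) (fun z => a ε z z - e) Ω := by
      have h1 : ContDiffOn ℝ (⊤ : ℕ∞) (fun z : G => a ε z z) Ω := by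
        have := (ha.1 ε ⟨hε.1, hεlt1.le⟩).comp
          ((contDiff_id.prodMk contDiff_id).contDiffOn :
            ContDiffOn ℝ (⊤ : ℕ∞) (fun z : G => (z, z)) Ω)
          (fun z hz => ⟨hz, hz⟩)
        exact this
      exact h1.sub contDiffOn_const
    have hdd : ContDiffOn ℝ (⊤ : ℕ∞)
        (fun z => (ε ^ m)⁻¹ • (a ε z z - e)) Ω := hcd.const_smul _
    -- bound on ‖(ε^m)⁻¹ • (a ε x x - e)‖
    have hdx : ‖(ε ^ m)⁻¹ • (a ε x x - e)‖ ≤ R := by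
      have h0 := hcb 0 ε (hεi 0 (by omega)) x hx
      rw [norm_iteratedFDerivWithin_zero] at h0
      rw [norm_smul ((ε ^ m)⁻¹) (a ε x x - e), norm_inv, Real.norm_eq_abs, abs_of_pos hεm_pos]
      calc (ε ^ m)⁻¹ * ‖a ε x x - e‖ ≤ (ε ^ m)⁻¹ * (Cc 0 * ε ^ m) := by
            exact mul_le_mul_of_nonneg_left h0 (inv_nonneg.2 hεm_pos.le)
        _ = Cc 0 := by field_simp
        _ ≤ R := le_max_left _ _
    -- derivative bounds for the normalized difference
    have hdD : ∀ i, 1 ≤ i → i ≤ l →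
        ‖iteratedFDerivWithin ℝ i (fun z => (ε ^ m)⁻¹ • (a ε z z - e)) Ω x‖ ≤ D ^ i := by
      intro i h1i hil
      have heq := iteratedFDerivWithin_const_smul_apply
        (f := fun z => a ε z z - e) (a := (ε ^ m)⁻¹) (i := i)
        ((hcd x hxΩ).of_le (by exact_mod_cast le_top)) hUΩ hxΩ
      have : ‖iteratedFDerivWithin ℝ i (fun z => (ε ^ m)⁻¹ • (a ε z z - e)) Ω x‖
          = (ε ^ m)⁻¹ * ‖iteratedFDerivWithin ℝ i (fun z => a ε z z - e) Ω x‖ := by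
        rw [show (fun z => (ε ^ m)⁻¹ • (a ε z z - e))
            = (ε ^ m)⁻¹ • (fun z => a ε z z - e) from rfl, heq,
          norm_smul ((ε ^ m)⁻¹) (iteratedFDerivWithin ℝ i (fun z => a ε z z - e) Ω x),
          norm_inv, Real.norm_eq_abs, abs_of_pos hεm_pos]
      rw [this]
      calc (ε ^ m)⁻¹ * ‖iteratedFDerivWithin ℝ i (fun z => a ε z z - e) Ω x‖
          ≤ (ε ^ m)⁻¹ * (Cc i * ε ^ m) :=
            mul_le_mul_of_nonneg_left (hcb i ε (hεi i hil) x hx) (inv_nonneg.2 hεm_pos.le)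
        _ = Cc i := by field_simp
        _ ≤ D := le_one_add_sum_max Cc hil
        _ ≤ D ^ i := le_self_pow₀ hD1 (by omega)
    -- decomposition
    have hdecomp : (fun z => (h fun _ => a ε z z) - ContinuousLinearMap.id ℝ Λ)
        = fun z => ∑ s ∈ (Finset.univ : Finset (Finset (Fin N))).erase ∅,
            H (s.piecewise (fun _ => a ε z z - e) (fun _ => e)) := by
      funext z
      have h1 : (fun _ : Fin N => a ε z z)
          = (fun _ : Fin N => a ε z z - e) + (fun _ => e) := by
        funext i; simp
      have h2 : (h fun _ => a ε z z)
          = ∑ s : Finset (Fin N), h (s.piecewise (fun _ => a ε z z - e) (fun _ => e)) := by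
        rw [h1]; exact h.map_add_univ _ _
      have h3 : ∑ s : Finset (Fin N), h (s.piecewise (fun _ => a ε z z - e) (fun _ => e))
          = h ((∅ : Finset (Fin N)).piecewise (fun _ => a ε z z - e) (fun _ => e))
            + ∑ s ∈ (Finset.univ : Finset (Finset (Fin N))).erase ∅,
              h (s.piecewise (fun _ => a ε z z - e) (fun _ => e)) :=
        (Finset.add_sum_erase _ _ (Finset.mem_univ _)).symm
      have h4 : h ((∅ : Finset (Fin N)).piecewise (fun _ => a ε z z - e) (fun _ => e))
          = ContinuousLinearMap.id ℝ Λ := by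
        rw [Finset.piecewise_empty]; exact hid
      rw [h2, h3, h4]
      simp only [hHapp]
      abel
    rw [hdecomp]
    have hterm_smooth : ∀ s : Finset (Fin N),
        ContDiffOn ℝ (⊤ : ℕ∞)
          (fun z => H (s.piecewise (fun _ => a ε z z - e) (fun _ => e))) Ω := by
      intro s
      exact (hGsmooth s).comp_contDiffOn hcd
    rw [iteratedFDerivWithin_fun_sum_apply hUΩ hxΩ
      (fun s _ => (hterm_smooth s x hxΩ).of_le (by exact_mod_cast le_top))]
    refine le_trans (norm_sum_le _ _) ?_
    rw [show (∑ s ∈ (Finset.univ : Finset (Finset (Fin N))).erase ∅,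
        (l.factorial * CG s * D ^ l)) * ε ^ m
        = ∑ s ∈ (Finset.univ : Finset (Finset (Fin N))).erase ∅,
          (l.factorial * CG s * D ^ l * ε ^ m) from Finset.sum_mul _ _ _]
    refine Finset.sum_le_sum fun s hs => ?_
    -- per-term bound
    have hscard : 1 ≤ s.card := by
      have : s ≠ ∅ := (Finset.mem_erase.1 hs).1
      exact Nat.one_le_iff_ne_zero.2 (fun hc => this (Finset.card_eq_zero.1 hc))
    -- rewrite the term with scaling
    have hts_eq : (fun z => H (s.piecewise (fun _ => a ε z z - e) (fun _ => e)))
        = fun z => ((ε ^ m) ^ s.card) •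
            ((fun u : 𝔼 →L[ℝ] 𝔼 => H (s.piecewise (fun _ => u) (fun _ => e)))
              ((ε ^ m)⁻¹ • (a ε z z - e))) := by
      funext z
      have hcz : a ε z z - e = (ε ^ m) • ((ε ^ m)⁻¹ • (a ε z z - e)) :=
        (smul_inv_smul₀ hεm_ne _).symm
      have hpw : s.piecewise
            (fun _ : Fin N => (ε ^ m) • ((ε ^ m)⁻¹ • (a ε z z - e))) (fun _ => e)
          = fun i => (if i ∈ s then (ε ^ m) else 1) •
              (s.piecewise (fun _ : Fin N => (ε ^ m)⁻¹ • (a ε z z - e)) (fun _ => e)) i := by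
        funext i
        by_cases hi : i ∈ s
        · simp [Finset.piecewise_eq_of_mem _ _ _ hi, hi]
        · simp [Finset.piecewise_eq_of_notMem _ _ _ hi, hi]
      have key : H (s.piecewise
            (fun _ : Fin N => (ε ^ m) • ((ε ^ m)⁻¹ • (a ε z z - e))) (fun _ => e))
          = ((ε ^ m) ^ s.card) •
            H (s.piecewise (fun _ : Fin N => (ε ^ m)⁻¹ • (a ε z z - e)) (fun _ => e)) := by
        rw [hpw]
        simp only [hHapp]
        rw [h.map_smul_univ]
        congr 1
        rw [Finset.prod_ite_mem, Finset.univ_inter, Finset.prod_const]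
      calc H (s.piecewise (fun _ : Fin N => a ε z z - e) (fun _ => e))
          = H (s.piecewise
              (fun _ : Fin N => (ε ^ m) • ((ε ^ m)⁻¹ • (a ε z z - e))) (fun _ => e)) := by
            rw [← hcz]
        _ = _ := key
    rw [hts_eq]
    have hcomp_smooth : ContDiffOn ℝ (⊤ : ℕ∞)
        ((fun u : 𝔼 →L[ℝ] 𝔼 => H (s.piecewise (fun _ => u) (fun _ => e)))
          ∘ (fun z => (ε ^ m)⁻¹ • (a ε z z - e))) Ω :=
      (hGsmooth s).comp_contDiffOn hdd
    have hsmul_eq : (fun z => ((ε ^ m) ^ s.card) •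
          ((fun u : 𝔼 →L[ℝ] 𝔼 => H (s.piecewise (fun _ => u) (fun _ => e)))
            ((ε ^ m)⁻¹ • (a ε z z - e))))
        = ((ε ^ m) ^ s.card) •
          ((fun u : 𝔼 →L[ℝ] 𝔼 => H (s.piecewise (fun _ => u) (fun _ => e)))
            ∘ (fun z => (ε ^ m)⁻¹ • (a ε z z - e))) := rfl
    rw [hsmul_eq, iteratedFDerivWithin_const_smul_apply
      ((hcomp_smooth x hxΩ).of_le (by exact_mod_cast le_top)) hUΩ hxΩ,
      norm_smul ((ε ^ m) ^ s.card) (iteratedFDerivWithin ℝ l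
        ((fun u : 𝔼 →L[ℝ] 𝔼 => H (s.piecewise (fun _ => u) (fun _ => e)))
          ∘ (fun z => (ε ^ m)⁻¹ • (a ε z z - e))) Ω x),
      Real.norm_eq_abs, abs_of_pos (pow_pos hεm_pos _)]
    -- composition bound
    have hcompbd := norm_iteratedFDerivWithin_comp_le
      (g := fun u : 𝔼 →L[ℝ] 𝔼 => H (s.piecewise (fun _ => u) (fun _ => e)))
      (f := fun z => (ε ^ m)⁻¹ • (a ε z z - e)) (n := l) (s := Ω) (t := univ)
      (N := ((⊤ : ℕ∞) : WithTop ℕ∞)) (hGsmooth s).contDiffOn hdd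
      (by exact_mod_cast le_top) uniqueDiffOn_univ hUΩ (mapsTo_univ _ _) hxΩ
      (C := CG s) (D := D)
      (fun i hi => by
        rw [iteratedFDerivWithin_univ]
        exact hCG s i hi _ (mem_closedBall_zero_iff.2 hdx))
      hdD
    calc ((ε ^ m) ^ s.card) *
          ‖iteratedFDerivWithin ℝ l
            ((fun u : 𝔼 →L[ℝ] 𝔼 => H (s.piecewise (fun _ => u) (fun _ => e)))
              ∘ (fun z => (ε ^ m)⁻¹ • (a ε z z - e))) Ω x‖
        ≤ ((ε ^ m) ^ s.card) * (l.factorial * CG s * D ^ l) :=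
          mul_le_mul_of_nonneg_left hcompbd (pow_nonneg hεm_pos.le _)
      _ ≤ (ε ^ m) * (l.factorial * CG s * D ^ l) := by
          refine mul_le_mul_of_nonneg_right ?_ ?_
          · calc ((ε ^ m) ^ s.card) = ε ^ (m * s.card) := by rw [pow_mul]
              _ ≤ ε ^ m := pow_le_pow_of_le_one hε.1.le hεlt1.le
                  (Nat.le_mul_of_pos_right m hscard)
          · have hDl : (0:ℝ) ≤ D ^ l := pow_nonneg (le_trans zero_le_one hD1) l
            have hfac : (0:ℝ) ≤ (l.factorial : ℝ) := Nat.cast_nonneg _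
            exact mul_nonneg (mul_nonneg hfac (hCG0 s)) hDl
      _ = l.factorial * CG s * D ^ l * ε ^ m := by ring
end

section
/- Let R : P → C^∞(M) be a map defined on a parameter set P, and suppose R satisfies the strict positivity condition: for every compact K ⊆ M there is C_K > 0 such that along every admitted parameter net (p_ε), inf_{x∈K} R(p_ε)(x) ≥ C_K for ε small. Choose a continuous function h₀ : M → (0,∞) with h₀(x) ≤ C_{B̄(x)} for suitable compact balls B̄(x), and a smooth χ : M × ℝ → [0,1] with χ(x,t) = 0 for t ≤ h₀(x)/2 and χ(x,t) = 1 for t ≥ h₀(x). Define R̃(p)(x) := R(p)(x)·χ(x,R(p)(x)) + 1 − χ(x,R(p)(x)). Then R̃(p)(x) > 0 for ALL p and x, and for every compact K and admitted net (p_ε) one has R̃(p_ε) = R(p_ε) on K for ε small; consequently S(p) := 1/R̃(p) defines a map into C^∞(M) with R·S = 1 on compacta along admitted nets for small ε. -/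
open Set Metric

/-- The core construction of Theorem 3.57 (invertibility of generalized functions
bounded away from zero): given `R` satisfying the uniform strict positivity condition
along admitted parameter nets, the cutoff modification
`R̃(p)(x) = R(p)(x)·χ(x,R(p)(x)) + 1 − χ(x,R(p)(x))` is everywhere positive, agrees
with `R` eventually on compacta along admitted nets, and its reciprocal `S = 1/R̃`
satisfies `R·S = 1` eventually on compacta along admitted nets. -/
theorem invertibility_construction
    {M : Type*} [MetricSpace M] {P : Type*}
    (Nets : Set (ℝ → P))
    (R Rt S : P → M → ℝ)
    (CK : Set M → ℝ)
    (hCK : ∀ K : Set M, IsCompact K → 0 < CK K)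
    (hmon : ∀ K L : Set M, K ⊆ L → CK L ≤ CK K)
    (hpos : ∀ K : Set M, IsCompact K → ∀ pnet ∈ Nets, ∃ ε₀ > (0 : ℝ),
      ∀ ε ∈ Set.Ioo (0 : ℝ) ε₀, ∀ x ∈ K, CK K ≤ R (pnet ε) x)
    (ρ : M → ℝ) (hρc : Continuous ρ)
    (hρ : ∀ x, 0 < ρ x ∧ IsCompact (closedBall x (ρ x)))
    (h₀ : M → ℝ) (hh₀c : Continuous h₀)
    (hh₀ : ∀ x, 0 < h₀ x ∧ h₀ x ≤ CK (closedBall x (ρ x)))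
    (χ : M → ℝ → ℝ) (hχc : Continuous fun p : M × ℝ => χ p.1 p.2)
    (hχ01 : ∀ x t, 0 ≤ χ x t ∧ χ x t ≤ 1)
    (hχ0 : ∀ x t, t ≤ h₀ x / 2 → χ x t = 0)
    (hχ1 : ∀ x t, h₀ x ≤ t → χ x t = 1)
    (hRt : ∀ p x, Rt p x = R p x * χ x (R p x) + 1 - χ x (R p x))
    (hS : ∀ p x, S p x = (Rt p x)⁻¹) :
    -- R̃ is strictly positive for ALL parameters and points
    (∀ p x, 0 < Rt p x) ∧
    -- R̃ agrees with R eventually on compacta along admitted nets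
    (∀ K : Set M, IsCompact K → ∀ pnet ∈ Nets, ∃ ε₀ > (0 : ℝ),
      ∀ ε ∈ Set.Ioo (0 : ℝ) ε₀, ∀ x ∈ K, Rt (pnet ε) x = R (pnet ε) x) ∧
    -- S = 1/R̃ is a multiplicative inverse of R on compacta along admitted nets
    (∀ K : Set M, IsCompact K → ∀ pnet ∈ Nets, ∃ ε₀ > (0 : ℝ),
      ∀ ε ∈ Set.Ioo (0 : ℝ) ε₀, ∀ x ∈ K, R (pnet ε) x * S (pnet ε) x = 1) := by
  have hpos' : ∀ p x, 0 < Rt p x := by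
    intro p x
    have h01 := hχ01 x (R p x)
    rw [hRt]
    rcases eq_or_ne (χ x (R p x)) 0 with h | h
    · simp [h]
    · have hc : 0 < χ x (R p x) := lt_of_le_of_ne h01.1 (Ne.symm h)
      have ht : h₀ x / 2 < R p x := by
        by_contra hle
        exact h (hχ0 x _ (le_of_not_gt hle))
      have hx0 := (hh₀ x).1
      nlinarith [h01.2]
  have agree : ∀ K : Set M, IsCompact K → ∀ pnet ∈ Nets, ∃ ε₀ > (0:ℝ),
      ∀ ε ∈ Set.Ioo (0:ℝ) ε₀, ∀ x ∈ K, Rt (pnet ε) x = R (pnet ε) x := by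
    intro K hK pnet hnet
    have hr : ∀ x : M, ∃ r > 0, r ≤ ρ x / 4 ∧ ∀ y ∈ closedBall x r, ρ x / 2 ≤ ρ y := by
      intro x
      have hx := (hρ x).1
      have hopen : IsOpen (ρ ⁻¹' Ioi (ρ x / 2)) := isOpen_Ioi.preimage hρc
      have hmem : x ∈ ρ ⁻¹' Ioi (ρ x / 2) := by
        simp only [Set.mem_preimage, Set.mem_Ioi]; linarith
      obtain ⟨δ, hδ, hball⟩ := Metric.isOpen_iff.1 hopen x hmem
      refine ⟨min (δ/2) (ρ x/4), by positivity, min_le_right _ _, ?_⟩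
      intro y hy
      have hyb : y ∈ ball x δ := by
        rw [mem_closedBall] at hy; rw [mem_ball]
        calc dist y x ≤ min (δ/2) (ρ x/4) := hy
          _ ≤ δ/2 := min_le_left _ _
          _ < δ := by linarith
      exact le_of_lt (hball hyb)
    choose r hr1 hr2 hr3 using hr
    obtain ⟨t, htK, hcover⟩ := hK.elim_nhds_subcover (fun x => ball x (r x))
      (fun x _ => ball_mem_nhds x (hr1 x))
    have hEach : ∀ i : M, ∃ ε₀ > (0:ℝ), ∀ ε ∈ Set.Ioo (0:ℝ) ε₀,
        ∀ y ∈ K ∩ closedBall i (r i),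
        CK (K ∩ closedBall i (r i)) ≤ R (pnet ε) y :=
      fun i => hpos _ (hK.inter_right Metric.isClosed_closedBall) pnet hnet
    choose e he1 he2 using hEach
    rcases t.eq_empty_or_nonempty with hte | hte
    · refine ⟨1, one_pos, ?_⟩
      intro ε hε x hx
      have hmem := hcover hx
      simp [hte] at hmem
    · refine ⟨t.inf' hte e, ?_, ?_⟩
      · obtain ⟨i, hi, hie⟩ := Finset.exists_mem_eq_inf' hte e
        rw [hie]; exact he1 i
      · intro ε hε x hx
        have hmem := hcover hx
        simp only [Set.mem_iUnion] at hmem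
        obtain ⟨i, hi, hxi⟩ := hmem
        have hxK : x ∈ K ∩ closedBall i (r i) := ⟨hx, ball_subset_closedBall hxi⟩
        have hεi : ε ∈ Set.Ioo 0 (e i) :=
          ⟨hε.1, lt_of_lt_of_le hε.2 (Finset.inf'_le e hi)⟩
        have hR := he2 i ε hεi x hxK
        have hsub : K ∩ closedBall i (r i) ⊆ closedBall x (ρ x) := by
          intro z hz
          have h1 : dist z i ≤ r i := hz.2
          have h2 : dist x i < r i := mem_ball.1 hxi
          have h4 : ρ i / 2 ≤ ρ x := hr3 i x (ball_subset_closedBall hxi)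
          have h5 := hr2 i
          have hd : dist z x ≤ 2 * r i := by
            calc dist z x ≤ dist z i + dist i x := dist_triangle _ _ _
              _ ≤ r i + r i := by rw [dist_comm i x]; linarith
              _ = 2 * r i := by ring
          rw [mem_closedBall]; linarith
        have hh : h₀ x ≤ R (pnet ε) x := by
          have h6 := (hh₀ x).2
          have hm := hmon _ _ hsub
          linarith
        rw [hRt, hχ1 x _ hh]; ring
  refine ⟨hpos', agree, ?_⟩
  intro K hK pnet hnet
  obtain ⟨ε₀, hε₀, hA⟩ := agree K hK pnet hnet
  refine ⟨ε₀, hε₀, fun ε hε x hx => ?_⟩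
  rw [hS, ← hA ε hε x hx]
  exact mul_inv_cancel₀ (ne_of_gt (hpos' _ _))
end
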